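/- arXiv:1203.5411 — 3 statements merged into one kernel-verified Lean document; each statement's English description precedes it below -/
import Mathlib

section
/- Let m ≥ 1, p ≥ 0 be integers and α ≥ β > 0 reals with (2m−1)β − 2pα ≥ 0. Then for every r > 0, 1 + (2m−1)βr coth(βr) − 2pαr coth(αr) ≥ 2(m − p α/β). -/
/-!
Write `coth = cosh / sinh`. Since `coth` is decreasing on `(0, ∞)` and `αr ≥ βr`, the negative term
`2pαr coth(αr)` is at most `2pαr coth(βr)`, so the left side minus `1` is at least
`((2m-1)β - 2pα) r coth(βr) = ((2m-1)β - 2pα)/β · βr coth(βr)`. The coefficient is nonnegative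
by hypothesis and `x coth x ≥ 1` (i.e. `tanh x ≤ x`), which leaves `1 + (2m-1) - 2pα/β`.
-/

open Real

theorem Real.sinh_le_mul_cosh {x : ℝ} (hx : 0 ≤ x) : sinh x ≤ x * cosh x := by
  have hmono : MonotoneOn (fun y : ℝ => y * cosh y - sinh y) (Set.Ici 0) := by
    refine monotoneOn_of_deriv_nonneg (convex_Ici 0) (by fun_prop) (by fun_prop) fun y hy => ?_
    rw [interior_Ici, Set.mem_Ioi] at hy
    have hderiv : HasDerivAt (fun y : ℝ => y * cosh y - sinh y) (y * sinh y) y :=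
      (((hasDerivAt_id' y).fun_mul (hasDerivAt_cosh y)).fun_sub
        (hasDerivAt_sinh y)).congr_deriv (by ring)
    rw [hderiv.deriv]
    exact mul_nonneg hy.le (sinh_nonneg_iff.mpr hy.le)
  simpa using hmono Set.self_mem_Ici hx hx

theorem Real.one_le_mul_cosh_div_sinh {x : ℝ} (hx : 0 < x) : 1 ≤ x * (cosh x / sinh x) := by
  rw [← mul_div_assoc, one_le_div (sinh_pos_iff.mpr hx)]
  exact sinh_le_mul_cosh hx.le

theorem Real.cosh_div_sinh_le_cosh_div_sinh {x y : ℝ} (hx : 0 < x) (hxy : x ≤ y) :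
    cosh y / sinh y ≤ cosh x / sinh x := by
  rw [div_le_div_iff₀ (sinh_pos_iff.mpr (hx.trans_le hxy)) (sinh_pos_iff.mpr hx)]
  have hsub : 0 ≤ sinh (y - x) := sinh_nonneg_iff.mpr (sub_nonneg.mpr hxy)
  rw [sinh_sub] at hsub
  linarith

theorem div_le_mul_coth_sub_mul_coth {k l a b r : ℝ} (hl : 0 ≤ l) (hb : 0 < b) (hba : b ≤ a)
    (hr : 0 < r) (hkl : 0 ≤ k * b - l * a) :
    (k * b - l * a) / b
      ≤ k * b * r * (cosh (b * r) / sinh (b * r)) - l * a * r * (cosh (a * r) / sinh (a * r)) := by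
  have hbr : 0 < b * r := mul_pos hb hr
  have hcoth := cosh_div_sinh_le_cosh_div_sinh hbr (mul_le_mul_of_nonneg_right hba hr.le)
  have ha : 0 ≤ a := hb.le.trans hba
  calc (k * b - l * a) / b
      ≤ (k * b - l * a) / b * (b * r * (cosh (b * r) / sinh (b * r))) :=
        le_mul_of_one_le_right (div_nonneg hkl hb.le) (one_le_mul_cosh_div_sinh hbr)
    _ = k * b * r * (cosh (b * r) / sinh (b * r)) - l * a * r * (cosh (b * r) / sinh (b * r)) := by
        field_simp
    _ ≤ k * b * r * (cosh (b * r) / sinh (b * r)) - l * a * r * (cosh (a * r) / sinh (a * r)) := by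
        gcongr

theorem stmt11_general (m p : ℕ) (a b : ℝ) (hb : 0 < b) (hba : b ≤ a)
    (hcond : 0 ≤ (2 * (m : ℝ) - 1) * b - 2 * p * a) :
    ∀ r : ℝ, 0 < r →
      2 * ((m : ℝ) - p * a / b)
        ≤ 1 + (2 * (m : ℝ) - 1) * b * r * (Real.cosh (b * r) / Real.sinh (b * r))
            - 2 * p * a * r * (Real.cosh (a * r) / Real.sinh (a * r)) := by
  intro r hr
  have hbound := div_le_mul_coth_sub_mul_coth (by positivity) hb hba hr hcond
  have hsplit : 2 * ((m : ℝ) - p * a / b) = 1 + ((2 * (m : ℝ) - 1) * b - 2 * p * a) / b := by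
    field_simp
    ring
  linarith

/-- For integers `m ≥ 1`, `p ≥ 0` and reals `α ≥ β > 0` with
`(2m−1)β − 2pα ≥ 0`, one has for every `r > 0`:
`1 + (2m−1)βr coth(βr) − 2pαr coth(αr) ≥ 2(m − p α/β)`. -/
theorem stmt11 (m p : ℕ) (hm : 1 ≤ m) (a b : ℝ) (hb : 0 < b) (hba : b ≤ a)
    (hcond : 0 ≤ (2 * (m : ℝ) - 1) * b - 2 * p * a) :
    ∀ r : ℝ, 0 < r →
      2 * ((m : ℝ) - p * a / b)
        ≤ 1 + (2 * (m : ℝ) - 1) * b * r * (Real.cosh (b * r) / Real.sinh (b * r))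
            - 2 * p * a * r * (Real.cosh (a * r) / Real.sinh (a * r)) :=
  stmt11_general m p a b hb hba hcond
end

section
/- Let a ≥ 0, b² ∈ [0, 1/4], m ≥ 2, p ≥ 1 be such that 2 + (m−2)(1+√(1−4b²)) − (2p−1)(1+√(1+4a²)) > 0. Then the constant λ = [2 + (m−1)(1+√(1−4b²)) − 2p(1+√(1+4a²))]/2 satisfies: for any symmetric bilinear form H with (c₁/r)(g − dr⊗dr) ≤ H ≤ (c₂/r)(g − dr⊗dr) where c₁ = (1+√(1−4b²))/2, c₂ = (1+√(1+4a²))/2, the eigenvalues μ₁ ≤ ... ≤ μ_m of 2dr⊗dr + 2rH satisfy Σμ_i − 2p μ_m ≥ 2λ. -/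
/-! The sum of the eigenvalues of `A = 2 u uᵀ + 2r H` is its trace `2 + 2r tr H`, and testing the
lower bound on `H` against the coordinate vectors gives `tr H ≥ c₁ (m - 1) / r`. Each eigenvalue is
the Rayleigh quotient of a unit eigenvector `v`, which the upper bound on `H` caps at
`2 (u ⬝ᵥ v)² + 2c₂ (1 - (u ⬝ᵥ v)²) ≤ 2c₂`, since `c₂ ≥ 1`. -/

open Matrix

namespace Matrix

variable {n : Type*} [Fintype n]

theorem dotProduct_vecMulVec_self_mulVec {R : Type*} [CommSemiring R] (u v : n → R) :
    v ⬝ᵥ vecMulVec u u *ᵥ v = (u ⬝ᵥ v) ^ 2 := by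
  rw [vecMulVec_mulVec, op_smul_eq_smul, dotProduct_smul, smul_eq_mul, dotProduct_comm, sq]

theorem trace_le_trace_of_dotProduct_mulVec_le {R : Type*} [NonAssocSemiring R] [PartialOrder R]
    [IsOrderedAddMonoid R] [DecidableEq n] {A B : Matrix n n R}
    (h : ∀ v, v ⬝ᵥ A *ᵥ v ≤ v ⬝ᵥ B *ᵥ v) : A.trace ≤ B.trace :=
  Finset.sum_le_sum fun i _ => by simpa [mulVec_single_one] using h (Pi.single i 1)

theorem IsHermitian.eigenvalues_le_of_dotProduct_mulVec_le [DecidableEq n] {A : Matrix n n ℝ}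
    (hA : A.IsHermitian) {c : ℝ} (h : ∀ v, v ⬝ᵥ A *ᵥ v ≤ c * (v ⬝ᵥ v)) (i : n) :
    hA.eigenvalues i ≤ c := by
  have hunit : ⇑(hA.eigenvectorBasis i) ⬝ᵥ ⇑(hA.eigenvectorBasis i) = 1 := by
    have h := real_inner_self_eq_norm_sq (hA.eigenvectorBasis i)
    rw [hA.eigenvectorBasis.orthonormal.1 i, EuclideanSpace.inner_eq_star_dotProduct] at h
    simpa using h
  simpa [hA.eigenvalues_eq i, hunit] using h (hA.eigenvectorBasis i)

theorem IsHermitian.sum_eigenvalues_eq_trace [DecidableEq n] {A : Matrix n n ℝ}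
    (hA : A.IsHermitian) : ∑ i, hA.eigenvalues i = A.trace := by
  simpa using hA.trace_eq_sum_eigenvalues.symm

theorem mul_card_sub_one_le_trace {R : Type*} [CommRing R] [PartialOrder R] [IsOrderedRing R]
    [DecidableEq n] {u : n → R} (hu : u ⬝ᵥ u = 1) {H : Matrix n n R} {c : R}
    (h : ∀ v, c * (v ⬝ᵥ v - (u ⬝ᵥ v) ^ 2) ≤ v ⬝ᵥ H *ᵥ v) :
    c * (Fintype.card n - 1) ≤ H.trace := by
  have hform : ∀ v, v ⬝ᵥ (c • (1 - vecMulVec u u)) *ᵥ v = c * (v ⬝ᵥ v - (u ⬝ᵥ v) ^ 2) := by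
    intro v
    rw [smul_mulVec, sub_mulVec, one_mulVec, dotProduct_smul, dotProduct_sub,
      dotProduct_vecMulVec_self_mulVec, smul_eq_mul]
  simpa [hu] using trace_le_trace_of_dotProduct_mulVec_le fun v => (hform v).trans_le (h v)

end Matrix

/-- Let `a ≥ 0`, `b² ∈ [0,1/4]`, `m ≥ 2`, `p ≥ 1` with
`2 + (m−2)(1+√(1−4b²)) − (2p−1)(1+√(1+4a²)) > 0`, and set
`c₁ = (1+√(1−4b²))/2`, `c₂ = (1+√(1+4a²))/2`,
`λ = [2 + (m−1)(1+√(1−4b²)) − 2p(1+√(1+4a²))]/2`. If `H` is a symmetric bilinear form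
with `H(u) = 0` for the unit covector direction `u` and
`(c₁/r)(g − dr⊗dr) ≤ H ≤ (c₂/r)(g − dr⊗dr)`, then the eigenvalues `μ₁ ≤ ⋯ ≤ μ_m` of
`2 dr⊗dr + 2r H` satisfy `∑ μᵢ − 2p μ_m ≥ 2λ`. -/
theorem stmt12 (m p : ℕ) (hm : 2 ≤ m)
    (a b2 : ℝ)
    (r : ℝ) (hr : 0 < r)
    (u : Fin m → ℝ) (hu : u ⬝ᵥ u = 1)
    (H : Matrix (Fin m) (Fin m) ℝ)
    (hlow : ∀ v : Fin m → ℝ,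
      ((1 + Real.sqrt (1 - 4 * b2)) / 2) / r * (v ⬝ᵥ v - (u ⬝ᵥ v) ^ 2) ≤ v ⬝ᵥ H.mulVec v)
    (hupp : ∀ v : Fin m → ℝ,
      v ⬝ᵥ H.mulVec v ≤ ((1 + Real.sqrt (1 + 4 * a ^ 2)) / 2) / r * (v ⬝ᵥ v - (u ⬝ᵥ v) ^ 2))
    (hA : ((2 : ℝ) • vecMulVec u u + (2 * r) • H).IsHermitian) :
    2 * ((2 + ((m : ℝ) - 1) * (1 + Real.sqrt (1 - 4 * b2))
        - 2 * p * (1 + Real.sqrt (1 + 4 * a ^ 2))) / 2)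
      ≤ (∑ i, hA.eigenvalues i)
        - 2 * p * (Finset.univ.sup'
            (Finset.univ_nonempty_iff.mpr ⟨⟨0, by omega⟩⟩) hA.eigenvalues) := by
  set s₁ := Real.sqrt (1 - 4 * b2)
  set s₂ := Real.sqrt (1 + 4 * a ^ 2)
  have hs₂ : 1 ≤ s₂ := Real.one_le_sqrt.mpr (le_add_of_nonneg_right (by positivity))
  have hscale : ∀ c x : ℝ, 2 * r * (c / 2 / r * x) = c * x := fun c x => by field_simp
  have hsum : 2 + ((m : ℝ) - 1) * (1 + s₁) ≤ ∑ i, hA.eigenvalues i := by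
    have htrace := mul_le_mul_of_nonneg_left (mul_card_sub_one_le_trace hu hlow)
      (by positivity : (0 : ℝ) ≤ 2 * r)
    rw [hscale, Fintype.card_fin] at htrace
    rw [hA.sum_eigenvalues_eq_trace, trace_add, trace_smul, trace_smul, trace_vecMulVec, hu,
      smul_eq_mul, smul_eq_mul, mul_one]
    linarith
  have heig : ∀ i, hA.eigenvalues i ≤ 1 + s₂ :=
    hA.eigenvalues_le_of_dotProduct_mulVec_le fun v => by
      have hHv := mul_le_mul_of_nonneg_left (hupp v) (by positivity : (0 : ℝ) ≤ 2 * r)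
      rw [hscale] at hHv
      rw [add_mulVec, smul_mulVec, smul_mulVec, dotProduct_add, dotProduct_smul, dotProduct_smul,
        dotProduct_vecMulVec_self_mulVec, smul_eq_mul, smul_eq_mul]
      linarith [mul_nonneg (sub_nonneg.2 hs₂) (sq_nonneg (u ⬝ᵥ v))]
  have hmax := Finset.sup'_le (Finset.univ_nonempty_iff.mpr ⟨⟨0, by omega⟩⟩) hA.eigenvalues
    fun i _ => heig i
  linarith [mul_le_mul_of_nonneg_left hmax (by positivity : (0 : ℝ) ≤ 2 * p)]
end

section
/- Let M be an isotropic submanifold of dimension m ≥ 2 in a Riemannian manifold, i.e. |A(e,e)| is independent of the unit tangent vector e at each point. Then for every unit tangent vector ν, ||i_ν A||² ≤ ||A||²/2, where ||i_ν A||² = Σ_j |A(ν, e_j)|² for an orthonormal frame {e_j} and ||A||² = Σ_{i,j} |A(e_i,e_j)|². -/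
/-!
Both sides are Hilbert–Schmidt sums, which do not depend on the orthonormal basis, so we may
compute them in a basis `f` with `f 0 = ν`. In the matrix `aᵢⱼ = ‖A(fᵢ, fⱼ)‖²`, row `0` and
column `0` each sum to `‖i_ν A‖²` and share only the entry `a₀₀`; isotropy gives `a₁₁ = a₀₀`,
which makes up for the overlap, so the total is at least `2 ‖i_ν A‖²`.
-/

open Finset

section HilbertSchmidt

variable {𝕜 E F ι κ : Type*} [RCLike 𝕜] [Fintype ι] [Fintype κ]
  [NormedAddCommGroup E] [InnerProductSpace 𝕜 E] [NormedAddCommGroup F] [InnerProductSpace 𝕜 F]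

-- `T` is corestricted to its range because the adjoint needs a finite-dimensional codomain.
lemma ofReal_sum_norm_apply_sq_eq_trace [FiniteDimensional 𝕜 E] (T : E →ₗ[𝕜] F)
    (b : OrthonormalBasis ι 𝕜 E) :
    ((∑ i, ‖T (b i)‖ ^ 2 : ℝ) : 𝕜) =
      (LinearMap.adjoint T.rangeRestrict ∘ₗ T.rangeRestrict).trace 𝕜 E := by
  rw [LinearMap.trace_eq_sum_inner _ b, RCLike.ofReal_sum]
  refine sum_congr rfl fun i _ => ?_
  rw [LinearMap.comp_apply, LinearMap.adjoint_inner_right, inner_self_eq_norm_sq_to_K,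
    RCLike.ofReal_pow]
  rfl

lemma sum_norm_apply_sq_eq (T : E →ₗ[𝕜] F) (b : OrthonormalBasis ι 𝕜 E)
    (b' : OrthonormalBasis κ 𝕜 E) :
    ∑ i, ‖T (b i)‖ ^ 2 = ∑ k, ‖T (b' k)‖ ^ 2 := by
  have : FiniteDimensional 𝕜 E := .of_basis b.toBasis
  exact_mod_cast (ofReal_sum_norm_apply_sq_eq_trace T b).trans
    (ofReal_sum_norm_apply_sq_eq_trace T b').symm

lemma sum_sum_norm_apply_apply_sq_eq (A : E →ₗ[𝕜] E →ₗ[𝕜] F) (b : OrthonormalBasis ι 𝕜 E)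
    (b' : OrthonormalBasis κ 𝕜 E) :
    ∑ i, ∑ j, ‖A (b i) (b j)‖ ^ 2 = ∑ k, ∑ l, ‖A (b' k) (b' l)‖ ^ 2 :=
  calc ∑ i, ∑ j, ‖A (b i) (b j)‖ ^ 2
      = ∑ i, ∑ l, ‖A (b i) (b' l)‖ ^ 2 := sum_congr rfl fun _ _ => sum_norm_apply_sq_eq _ b b'
    _ = ∑ l, ∑ i, ‖A.flip (b' l) (b i)‖ ^ 2 := sum_comm
    _ = ∑ l, ∑ k, ‖A.flip (b' l) (b' k)‖ ^ 2 :=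
        sum_congr rfl fun _ _ => sum_norm_apply_sq_eq _ b b'
    _ = ∑ k, ∑ l, ‖A (b' k) (b' l)‖ ^ 2 := sum_comm

end HilbertSchmidt

lemma exists_orthonormalBasis_apply_eq {𝕜 E ι : Type*} [RCLike 𝕜] [Fintype ι]
    [NormedAddCommGroup E] [InnerProductSpace 𝕜 E]
    (h : Module.finrank 𝕜 E = Fintype.card ι) (i : ι) {v : E} (hv : ‖v‖ = 1) :
    ∃ b : OrthonormalBasis ι 𝕜 E, b i = v := by
  have : FiniteDimensional 𝕜 E := Module.finite_of_finrank_pos (h ▸ Fintype.card_pos_iff.mpr ⟨i⟩)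
  have hv' : Orthonormal 𝕜 (({i} : Set ι).domRestrict fun _ => v) :=
    orthonormal_subsingleton_iff.mpr fun _ => hv
  obtain ⟨b, hb⟩ := hv'.exists_orthonormalBasis_extension_of_card_eq h
  exact ⟨b, hb i rfl⟩

lemma two_mul_sum_le_sum_sum_of_symm {ι : Type*} [Fintype ι] (a : ι → ι → ℝ)
    (h0 : ∀ i j, 0 ≤ a i j) (hsymm : ∀ i j, a i j = a j i) {i₀ i₁ : ι} (hne : i₁ ≠ i₀)
    (hdiag : a i₁ i₁ = a i₀ i₀) :
    2 * ∑ j, a i₀ j ≤ ∑ i, ∑ j, a i j := by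
  classical
  have hi₁ : i₁ ∈ univ.erase i₀ := mem_erase.mpr ⟨hne, mem_univ _⟩
  have hcol : a i₀ i₀ + ∑ i ∈ univ.erase i₀, a i i₀ = ∑ j, a i₀ j := by
    simp only [hsymm _ i₀]
    exact add_sum_erase _ _ (mem_univ i₀)
  have hrow₁ : a i₁ i₀ + a i₁ i₁ ≤ ∑ j, a i₁ j :=
    add_le_sum (fun j _ => h0 i₁ j) (mem_univ _) (mem_univ _) hne.symm
  have hrows : ∑ i ∈ (univ.erase i₀).erase i₁, a i i₀ ≤
      ∑ i ∈ (univ.erase i₀).erase i₁, ∑ j, a i j :=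
    sum_le_sum fun i _ => single_le_sum (fun j _ => h0 i j) (mem_univ i₀)
  have hcross : ∑ i ∈ univ.erase i₀, a i i₀ + a i₁ i₁ ≤ ∑ i ∈ univ.erase i₀, ∑ j, a i j := by
    rw [← add_sum_erase _ _ hi₁, ← add_sum_erase _ (fun i => ∑ j, a i j) hi₁]
    linarith
  calc 2 * ∑ j, a i₀ j = ∑ j, a i₀ j + (∑ i ∈ univ.erase i₀, a i i₀ + a i₁ i₁) := by
        rw [hdiag]; linarith
    _ ≤ ∑ j, a i₀ j + ∑ i ∈ univ.erase i₀, ∑ j, a i j := by gcongr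
    _ = ∑ i, ∑ j, a i j := add_sum_erase _ (fun i => ∑ j, a i j) (mem_univ i₀)

/-- If `A` is the (symmetric, vector-valued) second fundamental form of an
isotropic submanifold of dimension `m ≥ 2` (i.e. `‖A(e,e)‖` is independent of the unit
vector `e`), then for every unit tangent vector `ν`,
`‖i_ν A‖² = ∑ⱼ ‖A(ν,eⱼ)‖² ≤ (1/2) ∑_{i,j} ‖A(eᵢ,eⱼ)‖² = ‖A‖²/2`. -/
theorem stmt16 {V W : Type*} [NormedAddCommGroup V] [InnerProductSpace ℝ V]
    [NormedAddCommGroup W] [InnerProductSpace ℝ W]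
    (m : ℕ) (hm : 2 ≤ m) (e : OrthonormalBasis (Fin m) ℝ V)
    (A : V →ₗ[ℝ] V →ₗ[ℝ] W)
    (hsymm : ∀ X Y : V, A X Y = A Y X)
    (hiso : ∀ u v : V, ‖u‖ = 1 → ‖v‖ = 1 → ‖A u u‖ = ‖A v v‖) :
    ∀ ν : V, ‖ν‖ = 1 →
      ∑ j, ‖A ν (e j)‖ ^ 2 ≤ (∑ i, ∑ j, ‖A (e i) (e j)‖ ^ 2) / 2 := by
  intro ν hν
  let i₀ : Fin m := ⟨0, by omega⟩
  let i₁ : Fin m := ⟨1, hm⟩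
  obtain ⟨f, hf⟩ := exists_orthonormalBasis_apply_eq (𝕜 := ℝ)
    (Module.finrank_eq_card_basis e.toBasis) i₀ hν
  rw [sum_norm_apply_sq_eq (A ν) e f, sum_sum_norm_apply_apply_sq_eq A e f, ← hf,
    le_div_iff₀ two_pos, mul_comm]
  refine two_mul_sum_le_sum_sum_of_symm (i₀ := i₀) (i₁ := i₁) (fun i j => ‖A (f i) (f j)‖ ^ 2)
    (fun _ _ => by positivity) (fun i j => by rw [hsymm]) (by simp [i₀, i₁, Fin.ext_iff]) ?_
  rw [hiso (f i₁) (f i₀) (f.orthonormal.1 _) (f.orthonormal.1 _)]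
end
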